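/- arXiv:2205.04621 — 2 statements merged into one kernel-verified Lean document; each statement's English description precedes it below -/
import Mathlib

section
/- Let U_{(np)} ~ Beta(np, n+1-np) for p ∈ (0,1), and let ε satisfy p/(n+1) < ε < p. Then P(|U_{(np)} - p| > ε) ≤ 2 exp(-2(n+2)(ε - p/(n+1))^2). -/
/-!
The binomial CDF `t ↦ P(Bin(n, t) < k)` is an antiderivative of minus the density of `U_(k)`,
so `P(U_(k) > c) = P(Bin(n, c) < k)`; the lower tail reduces to the upper one because `1 - U_(k)`
is distributed as `U_(n+1-k)`. The Chernoff bound with Hoeffding's lemma for a Bernoulli variable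
bounds both binomial tails by `exp(-2nε²)` (as `k = np`), and `(n + 2)(ε - p/(n+1))² ≤ nε²` when
`p/(n+1) ≤ ε ≤ p`.
-/

open MeasureTheory Set Real ProbabilityTheory

lemma one_sub_add_mul_exp_le_exp {t : ℝ} (ht : t ∈ Icc (0 : ℝ) 1) (x : ℝ) :
    1 - t + t * exp x ≤ exp (t * x + x ^ 2 / 8) := by
  set μ : Measure ℝ := Ber((1 : ℝ), 0, ⟨t, ht⟩)
  have hsupp : ∀ᵐ y ∂μ, y ∈ Icc (0 : ℝ) 1 := by
    rw [ae_iff, ← compl_ofPred, ofPred_mem_eq,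
      bernoulliMeasure_apply_of_notMem_of_notMem _ measurableSet_Icc.compl] <;> simp
  have hmean : μ[id] = t := by simp [μ, integral_bernoulliMeasure]
  have hmgf : mgf (fun y => id y - μ[id]) μ x = (1 - t + t * exp x) * exp (-(t * x)) := by
    rw [hmean, mgf, integral_bernoulliMeasure]
    simp only [id, smul_eq_mul]
    rw [show x * (1 - t) = x + -(t * x) by ring, show x * (0 - t) = -(t * x) by ring, exp_add]
    ring
  have hHoeffding := (hasSubgaussianMGF_of_mem_Icc measurable_id.aemeasurable hsupp).mgf_le x
  rw [hmgf] at hHoeffding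
  calc 1 - t + t * exp x = (1 - t + t * exp x) * exp (-(t * x)) * exp (t * x) := by
        rw [mul_assoc, ← exp_add, neg_add_cancel, exp_zero, mul_one]
    _ ≤ exp (x ^ 2 / 8) * exp (t * x) := by
        gcongr
        refine hHoeffding.trans_eq (congrArg exp ?_)
        norm_num
        ring
    _ = exp (t * x + x ^ 2 / 8) := by rw [← exp_add, add_comm]

-- `P(Bin(n, t) < k)`
noncomputable def binomCDF (n k : ℕ) (t : ℝ) : ℝ :=
  ∑ j ∈ Finset.range k, (n.choose j : ℝ) * t ^ j * (1 - t) ^ (n - j)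

lemma binomCDF_le_exp_mul_pow {n k : ℕ} (hk : k ≤ n + 1) {t : ℝ} (ht : t ∈ Icc (0 : ℝ) 1)
    {L : ℝ} (hL : 0 ≤ L) :
    binomCDF n k t ≤ exp (L * (k - 1)) * (1 - t + t * exp (-L)) ^ n := by
  have hterm : ∀ j ∈ Finset.range (n + 1), 0 ≤ (n.choose j : ℝ) * t ^ j * (1 - t) ^ (n - j) :=
    fun j _ => by have := ht.1; have := ht.2; positivity
  calc binomCDF n k t
      ≤ ∑ j ∈ Finset.range k, exp (L * ((k - 1 : ℝ) - j)) *
          ((n.choose j : ℝ) * t ^ j * (1 - t) ^ (n - j)) := by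
        refine Finset.sum_le_sum fun j hj => le_mul_of_one_le_left
          (hterm j (Finset.range_subset_range.mpr hk hj)) (one_le_exp (mul_nonneg hL ?_))
        have : (j : ℝ) + 1 ≤ k := by exact_mod_cast Finset.mem_range.mp hj
        linarith
    _ ≤ ∑ j ∈ Finset.range (n + 1), exp (L * ((k - 1 : ℝ) - j)) *
          ((n.choose j : ℝ) * t ^ j * (1 - t) ^ (n - j)) :=
        Finset.sum_le_sum_of_subset_of_nonneg (Finset.range_subset_range.mpr hk)
          fun j hj _ => mul_nonneg (exp_nonneg _) (hterm j hj)
    _ = exp (L * (k - 1)) * (t * exp (-L) + (1 - t)) ^ n := by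
        rw [add_pow, Finset.mul_sum]
        refine Finset.sum_congr rfl fun j _ => ?_
        rw [mul_pow, ← exp_nat_mul, mul_sub, exp_sub, mul_neg, exp_neg]
        field_simp
    _ = exp (L * (k - 1)) * (1 - t + t * exp (-L)) ^ n := by ring

lemma binomCDF_le_exp {n k : ℕ} (hn : 0 < n) {t : ℝ} (ht : t ∈ Icc (0 : ℝ) 1)
    (hkt : (k : ℝ) - 1 ≤ n * t) :
    binomCDF n k t ≤ exp (-2 * (n * t - (k - 1)) ^ 2 / n) := by
  have hn' : (0 : ℝ) < n := Nat.cast_pos.mpr hn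
  have hk : k ≤ n + 1 := by
    have : (k : ℝ) ≤ n + 1 := by nlinarith [ht.2]
    exact_mod_cast this
  -- the minimizer of the exponent `L (k - 1) - n t L + n L² / 8`
  set L := 4 * (n * t - (k - 1)) / n with hLdef
  have hL : 0 ≤ L := div_nonneg (by linarith) hn'.le
  calc binomCDF n k t ≤ exp (L * (k - 1)) * (1 - t + t * exp (-L)) ^ n :=
        binomCDF_le_exp_mul_pow hk ht hL
    _ ≤ exp (L * (k - 1)) * exp (t * -L + (-L) ^ 2 / 8) ^ n := by
        gcongr
        · have := ht.1; have := ht.2; positivity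
        · exact one_sub_add_mul_exp_le_exp ht (-L)
    _ = exp (-2 * (n * t - (k - 1)) ^ 2 / n) := by
        rw [← exp_nat_mul, ← exp_add]
        congr 1
        rw [hLdef]
        field_simp
        ring

lemma binomCDF_one {n k : ℕ} (hk : k ≤ n) : binomCDF n k 1 = 0 :=
  Finset.sum_eq_zero fun j hj => by
    rw [sub_self, zero_pow (Nat.sub_ne_zero_of_lt (Finset.mem_range.mp hj |>.trans_le hk)),
      mul_zero]

-- the density of the `k`-th order statistic of `n` uniforms, i.e. of `Beta(k, n + 1 - k)`
noncomputable def orderStatDensity (n k : ℕ) (x : ℝ) : ℝ :=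
  ((k * n.choose k : ℕ) : ℝ) * x ^ (k - 1) * (1 - x) ^ (n - k)

lemma continuous_orderStatDensity (n k : ℕ) : Continuous (orderStatDensity n k) := by
  unfold orderStatDensity; fun_prop

lemma hasDerivAt_binomCDF (n k : ℕ) (t : ℝ) :
    HasDerivAt (binomCDF n k) (-orderStatDensity n k t) t := by
  have hterm (j : ℕ) : HasDerivAt (fun t : ℝ => (n.choose j : ℝ) * t ^ j * (1 - t) ^ (n - j))
      (orderStatDensity n j t - orderStatDensity n (j + 1) t) t := by
    refine (((hasDerivAt_pow j t).const_mul _).fun_mul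
      (((hasDerivAt_id' t).const_sub 1).fun_pow (n - j))).congr_deriv ?_
    have hc : (j + 1) * n.choose (j + 1) = n.choose j * (n - j) := by
      rw [mul_comm, Nat.choose_succ_right_eq]
    rw [orderStatDensity, orderStatDensity, hc, Nat.add_sub_cancel, Nat.sub_add_eq]
    push_cast
    ring
  have h := HasDerivAt.fun_sum fun j (_ : j ∈ Finset.range k) => hterm j
  have h0 : orderStatDensity n 0 t = 0 := by simp [orderStatDensity]
  rw [Finset.sum_range_sub', h0, zero_sub] at h
  exact h

lemma integral_orderStatDensity (n k : ℕ) (a b : ℝ) :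
    ∫ x in a..b, orderStatDensity n k x = binomCDF n k a - binomCDF n k b := by
  have h := intervalIntegral.integral_eq_sub_of_hasDerivAt (fun x _ => hasDerivAt_binomCDF n k x)
    ((continuous_orderStatDensity n k).neg.intervalIntegrable a b)
  rw [intervalIntegral.integral_neg] at h
  linarith

lemma orderStatDensity_one_sub {n k : ℕ} (hk1 : 1 ≤ k) (hkn : k ≤ n) (x : ℝ) :
    orderStatDensity n k (1 - x) = orderStatDensity n (n + 1 - k) x := by
  obtain ⟨j, rfl⟩ : ∃ j, k = j + 1 := ⟨k - 1, by omega⟩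
  have hc : (j + 1) * n.choose (j + 1) = (n - j) * n.choose (n - j) := by
    rw [mul_comm, Nat.choose_succ_right_eq, Nat.choose_symm (by omega), mul_comm]
  have e1 : n + 1 - (j + 1) = n - j := by omega
  have e2 : n - j - 1 = n - (j + 1) := by omega
  have e3 : n - (n - j) = j := by omega
  simp only [orderStatDensity, e1, e2, e3, hc, sub_sub_cancel, Nat.add_sub_cancel]
  ring

lemma Gamma_add_one_div_Gamma_mul_Gamma {n k : ℕ} (hk1 : 1 ≤ k) (hkn : k ≤ n) :
    Gamma (n + 1) / (Gamma k * Gamma (n + 1 - k)) = ((k * n.choose k : ℕ) : ℝ) := by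
  obtain ⟨j, rfl⟩ : ∃ j, k = j + 1 := ⟨k - 1, by omega⟩
  have hfact :
      (j + 1) * n.choose (j + 1) * (j.factorial * (n - (j + 1)).factorial) = n.factorial := by
    rw [← Nat.choose_mul_factorial_mul_factorial hkn, Nat.factorial_succ]
    ring
  have hsub : (n : ℝ) + 1 - (j + 1 : ℕ) = (n - (j + 1) : ℕ) + 1 := by
    rw [Nat.cast_sub hkn]; push_cast; ring
  rw [hsub, Nat.cast_succ j, Gamma_nat_eq_factorial, Gamma_nat_eq_factorial,
    Gamma_nat_eq_factorial, div_eq_iff (by positivity)]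
  exact_mod_cast hfact.symm

lemma integral_orderStatDensity_reflect {n k : ℕ} (hk1 : 1 ≤ k) (hkn : k ≤ n) (a b : ℝ) :
    ∫ x in a..b, orderStatDensity n k x =
      ∫ x in 1 - b..1 - a, orderStatDensity n (n + 1 - k) x := by
  simp_rw [← intervalIntegral.integral_comp_sub_left, ← orderStatDensity_one_sub hk1 hkn,
    sub_sub_cancel]

lemma orderStatDensity_upperTail_le {n k : ℕ} (hn : 0 < n) (hkn : k ≤ n) {c : ℝ} (hc : 0 ≤ c)
    (hkc : (k : ℝ) - 1 ≤ n * c) :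
    ∫ x in Ioo c 1, orderStatDensity n k x ≤ exp (-2 * (n * c - (k - 1)) ^ 2 / n) := by
  rcases lt_or_ge c 1 with hc1 | hc1
  · rw [← integral_Ioc_eq_integral_Ioo, ← intervalIntegral.integral_of_le hc1.le,
      integral_orderStatDensity, binomCDF_one hkn, sub_zero]
    exact binomCDF_le_exp hn ⟨hc, hc1.le⟩ hkc
  · rw [Ioo_eq_empty (not_lt.mpr hc1), setIntegral_empty]
    positivity

lemma orderStatDensity_lowerTail_le {n k : ℕ} (hn : 0 < n) (hk1 : 1 ≤ k) (hkn : k ≤ n) {c : ℝ}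
    (hc : c ≤ 1) (hkc : n * c ≤ k) :
    ∫ x in Ioo 0 c, orderStatDensity n k x ≤ exp (-2 * (k - n * c) ^ 2 / n) := by
  rcases le_or_gt c 0 with hc0 | hc0
  · rw [Ioo_eq_empty (not_lt.mpr hc0), setIntegral_empty]
    positivity
  have hcast : ((n + 1 - k : ℕ) : ℝ) = n + 1 - k := by
    rw [Nat.cast_sub (by omega)]; push_cast; ring
  calc ∫ x in Ioo 0 c, orderStatDensity n k x
      = ∫ x in Ioo (1 - c) 1, orderStatDensity n (n + 1 - k) x := by
        rw [← integral_Ioc_eq_integral_Ioo, ← intervalIntegral.integral_of_le hc0.le,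
          integral_orderStatDensity_reflect hk1 hkn, sub_zero,
          intervalIntegral.integral_of_le (by linarith), integral_Ioc_eq_integral_Ioo]
    _ ≤ exp (-2 * (n * (1 - c) - ((n + 1 - k : ℕ) - 1)) ^ 2 / n) :=
        orderStatDensity_upperTail_le hn (by omega) (by linarith) (by rw [hcast]; linarith)
    _ = exp (-2 * (k - n * c) ^ 2 / n) := by rw [hcast]; ring_nf

lemma add_two_mul_sq_sub_div_add_one_le {n p ε : ℝ} (hn : 0 ≤ n) (hpε : p / (n + 1) ≤ ε)
    (hεp : ε ≤ p) : (n + 2) * (ε - p / (n + 1)) ^ 2 ≤ n * ε ^ 2 := by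
  have hn1 : 0 < n + 1 := by linarith
  set d := ε - p / (n + 1) with hd
  have hd0 : 0 ≤ d := sub_nonneg.mpr hpε
  have hdε : (n + 1) * d ≤ n * ε := by
    rw [hd, mul_sub, mul_div_cancel₀ _ hn1.ne']; linarith
  have hsq : ((n + 1) * d) ^ 2 ≤ (n * ε) ^ 2 := pow_le_pow_left₀ (by positivity) hdε 2
  have hmul : (n + 1) ^ 2 * ((n + 2) * d ^ 2) ≤ (n + 1) ^ 2 * (n * ε ^ 2) := by
    nlinarith [mul_nonneg hn (sq_nonneg ε)]
  exact le_of_mul_le_mul_left hmul (by positivity)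

/-- Concentration of the `np`-th uniform order statistic: if `U_(np) ~ Beta(np, n+1-np)`
and `p/(n+1) < ε < p`, then `P(|U_(np) - p| > ε) ≤ 2 exp(-2(n+2)(ε - p/(n+1))²)`. -/
theorem uniform_orderStat_concentration (n k : ℕ) (p : ℝ) (hp : p ∈ Set.Ioo (0 : ℝ) 1)
    (hk : (k : ℝ) = p * n) (hk1 : 1 ≤ k) (hkn : k ≤ n)
    (ε : ℝ) (hε1 : p / (n + 1) < ε) (hε2 : ε < p)
    (f : ℝ → ℝ)
    (hf : ∀ x, f x = (Real.Gamma (n + 1) / (Real.Gamma k * Real.Gamma (n + 1 - k))) *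
        x ^ (k - 1) * (1 - x) ^ (n - k)) :
    (∫ x in Set.Ioo (0 : ℝ) 1 ∩ {x : ℝ | ε < |x - p|}, f x)
      ≤ 2 * Real.exp (-2 * (n + 2) * (ε - p / (n + 1)) ^ 2) := by
  obtain ⟨hp0, hp1⟩ := hp
  have hn : 0 < n := Nat.lt_of_lt_of_le hk1 hkn
  have hn' : (0 : ℝ) < n := Nat.cast_pos.mpr hn
  have hε0 : 0 < ε := (div_pos hp0 (by positivity)).trans hε1
  have hf' : f = orderStatDensity n k :=
    funext fun x => by rw [hf, Gamma_add_one_div_Gamma_mul_Gamma hk1 hkn, orderStatDensity]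
  have hset : Ioo 0 1 ∩ {x | ε < |x - p|} = Ioo 0 (p - ε) ∪ Ioo (p + ε) 1 := by
    ext x
    simp only [mem_inter_iff, mem_Ioo, mem_ofPred_eq, mem_union, lt_abs]
    grind
  have hlow : ∫ x in Ioo 0 (p - ε), orderStatDensity n k x ≤ exp (-2 * n * ε ^ 2) :=
    (orderStatDensity_lowerTail_le hn hk1 hkn (by linarith) (by rw [hk]; nlinarith)).trans_eq
      (by rw [hk]; field_simp; ring_nf)
  have hup : ∫ x in Ioo (p + ε) 1, orderStatDensity n k x ≤ exp (-2 * n * ε ^ 2) := by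
    refine (orderStatDensity_upperTail_le hn hkn (by linarith) (by rw [hk]; nlinarith)).trans
      (exp_le_exp.mpr ?_)
    rw [hk, div_le_iff₀ hn']
    nlinarith
  have hexp : exp (-2 * n * ε ^ 2) ≤ exp (-2 * (n + 2) * (ε - p / (n + 1)) ^ 2) := by
    have := add_two_mul_sq_sub_div_add_one_le hn'.le hε1.le hε2.le
    exact exp_le_exp.mpr (by linarith)
  have hint (a b : ℝ) : IntegrableOn (orderStatDensity n k) (Ioo a b) :=
    (continuous_orderStatDensity n k).integrableOn_Icc.mono_set Ioo_subset_Icc_self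
  have hdisj : Disjoint (Ioo 0 (p - ε)) (Ioo (p + ε) 1) :=
    disjoint_left.mpr fun x hx hx' => by linarith [hx.2, hx'.1]
  rw [hf', hset, setIntegral_union hdisj measurableSet_Ioo (hint _ _) (hint _ _)]
  linarith
end

section
/- Let U_{(k)} ~ Beta(k, n+1-k) with k ≤ n, and let m ≥ 2(n-k+1). Then E[(1 - U_{(k)})^{-m/2}] = ∞; consequently, for the parent density f_1(x) = 2/(x log^3 x) on (e,∞), every order statistic X_{(k)} = F^{-1}(U_{(k)}) has infinite mean. -/
open MeasureTheory Set Real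


-- key: 1/x not lintegrable near 0
lemma aux_lint_inv : ∫⁻ x in Set.Ioo (0:ℝ) (1/2), ENNReal.ofReal x⁻¹ = ⊤ := by
  by_contra h
  have hmeas : AEStronglyMeasurable (fun x : ℝ => x⁻¹)
      (volume.restrict (Set.Ioo (0:ℝ) (1/2))) :=
    (measurable_inv).aestronglyMeasurable
  have hpos : 0 ≤ᵐ[volume.restrict (Set.Ioo (0:ℝ) (1/2))] fun x : ℝ => x⁻¹ := by
    filter_upwards [ae_restrict_mem measurableSet_Ioo] with x hx
    exact le_of_lt (inv_pos.2 hx.1)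
  have hint : Integrable (fun x : ℝ => x⁻¹) (volume.restrict (Set.Ioo (0:ℝ) (1/2))) :=
    (lintegral_ofReal_ne_top_iff_integrable hmeas hpos).1 h
  have hint' : IntegrableOn (fun x : ℝ => x ^ (-1 : ℝ)) (Set.Ioo (0:ℝ) (1/2)) := by
    apply hint.congr
    filter_upwards [ae_restrict_mem measurableSet_Ioo] with x hx
    rw [Real.rpow_neg_one]
  rw [intervalIntegral.integrableOn_Ioo_rpow_iff (by norm_num : (0:ℝ) < 1/2)] at hint'
  exact lt_irrefl _ hint'

lemma aux_lint_inv' : ∫⁻ x in Set.Ioo (1/2 : ℝ) 1, ENNReal.ofReal (1 - x)⁻¹ = ⊤ := by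
  have hg : MeasurePreserving (fun x : ℝ => 1 + -x) volume volume :=
    (measurePreserving_add_left volume 1).comp (Measure.measurePreserving_neg _)
  have hemb : MeasurableEmbedding (fun x : ℝ => 1 + -x) :=
    ((Homeomorph.neg ℝ).trans (Homeomorph.addLeft (1:ℝ))).measurableEmbedding
  have := hg.setLIntegral_comp_emb hemb (fun y => ENNReal.ofReal y⁻¹) (Set.Ioo (1/2 : ℝ) 1)
  have himg : (fun x : ℝ => 1 + -x) '' Set.Ioo (1/2 : ℝ) 1 = Set.Ioo (0:ℝ) (1/2) := by
    have : (fun x : ℝ => 1 + -x) = fun x : ℝ => 1 - x := by funext x; ring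
    rw [this, Set.image_const_sub_Ioo]
    norm_num
  rw [himg] at this
  rw [← aux_lint_inv, ← this]
  apply lintegral_congr
  intro x
  rw [sub_eq_add_neg]

-- generic lower-bound-to-top lemma
lemma aux_top (f : ℝ → ℝ) (hf : Measurable f) (C : ℝ) (hC : 0 < C)
    (hle : ∀ x ∈ Set.Ioo (1/2 : ℝ) 1, C * (1 - x)⁻¹ ≤ f x) :
    ∫⁻ x in Set.Ioo (0:ℝ) 1, ENNReal.ofReal (f x) = ⊤ := by
  have h1 : ∫⁻ x in Set.Ioo (1/2:ℝ) 1, ENNReal.ofReal (C * (1 - x)⁻¹) = ⊤ := by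
    have : ∀ x : ℝ, ENNReal.ofReal (C * (1 - x)⁻¹)
        = ENNReal.ofReal C * ENNReal.ofReal (1 - x)⁻¹ := fun x =>
      ENNReal.ofReal_mul hC.le
    simp_rw [this]
    rw [lintegral_const_mul' _ _ ENNReal.ofReal_ne_top, aux_lint_inv',
      ENNReal.mul_top (by simpa using hC)]
  have h2 : ∫⁻ x in Set.Ioo (1/2:ℝ) 1, ENNReal.ofReal (C * (1 - x)⁻¹)
      ≤ ∫⁻ x in Set.Ioo (1/2:ℝ) 1, ENNReal.ofReal (f x) :=
    setLIntegral_mono (hf.ennreal_ofReal) fun x hx => ENNReal.ofReal_le_ofReal (hle x hx)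
  have h3 : ∫⁻ x in Set.Ioo (1/2:ℝ) 1, ENNReal.ofReal (f x)
      ≤ ∫⁻ x in Set.Ioo (0:ℝ) 1, ENNReal.ofReal (f x) :=
    lintegral_mono_set (fun x hx => ⟨by linarith [hx.1], hx.2⟩)
  exact top_le_iff.1 (h1 ▸ h2.trans h3)

/-- For `U_(k) ~ Beta(k, n+1-k)` with `k ≤ n` and `m ≥ 2(n-k+1)`,
`E[(1-U_(k))^{-m/2}] = ∞`; consequently, for the parent density
`f₁(x) = 2/(x log³ x)` on `(e,∞)` with quantile `F⁻¹(u) = exp((1-u)^{-1/2})`,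
the order statistic `X_(k) = F⁻¹(U_(k))` has infinite mean. -/
theorem beta_inverse_moment_infinite (n k m : ℕ) (hk1 : 1 ≤ k) (hkn : k ≤ n)
    (hm : 2 * (n - k + 1) ≤ m)
    (c : ℝ) (hc : c = Real.Gamma (n + 1) / (Real.Gamma k * Real.Gamma (n + 1 - k))) :
    (∫⁻ x in Set.Ioo (0 : ℝ) 1,
        ENNReal.ofReal (c * x ^ (k - 1) * (1 - x) ^ (n - k) *
          (1 - x) ^ (-(m : ℝ) / 2)) = ⊤) ∧
    (∫⁻ x in Set.Ioo (0 : ℝ) 1,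
        ENNReal.ofReal (c * x ^ (k - 1) * (1 - x) ^ (n - k) *
          Real.exp ((1 - x) ^ (-(1 : ℝ) / 2))) = ⊤) := by
  have hkR : (0:ℝ) < k := Nat.cast_pos.mpr hk1
  have hknR : (k:ℝ) ≤ n := Nat.cast_le.mpr hkn
  have hc0 : 0 < c := by
    rw [hc]
    apply div_pos (Real.Gamma_pos_of_pos (by positivity))
    exact mul_pos (Real.Gamma_pos_of_pos hkR) (Real.Gamma_pos_of_pos (by linarith))
  -- common facts on Ioo (1/2) 1
  have hhalf : ∀ x ∈ Set.Ioo (1/2:ℝ) 1, (1/2:ℝ)^(k-1) ≤ x^(k-1) := fun x hx =>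
    pow_le_pow_left₀ (by norm_num) hx.1.le _
  constructor
  · apply aux_top _ ?_ (c * (1/2:ℝ)^(k-1)) (by positivity)
    · intro x hx
      obtain ⟨hx1, hx2⟩ := hx
      have hy : 0 < 1 - x := by linarith
      have h2 : (1-x)⁻¹ ≤ (1-x)^(n-k) * (1-x) ^ (-(m:ℝ)/2) := by
        have heq : (1-x)^(n-k) * (1-x) ^ (-(m:ℝ)/2)
            = (1-x) ^ (((n-k:ℕ):ℝ) + (-(m:ℝ)/2)) := by
          rw [Real.rpow_add hy, Real.rpow_natCast]
        rw [heq, ← Real.rpow_neg_one (1-x)]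
        apply Real.rpow_le_rpow_of_exponent_ge hy (by linarith)
        have hnk : ((n-k:ℕ):ℝ) = (n:ℝ) - k := by
          push_cast [Nat.cast_sub hkn]; ring
        have hmr : (2:ℝ) * ((n:ℝ) - k + 1) ≤ m := by
          have : ((2 * (n - k + 1) : ℕ) : ℝ) ≤ (m:ℝ) := Nat.cast_le.mpr hm
          push_cast [Nat.cast_sub hkn] at this
          linarith
        rw [hnk]; linarith
      have h3 := mul_le_mul_of_nonneg_left
        (mul_le_mul (hhalf x ⟨hx1, hx2⟩) h2 (inv_pos.2 hy).le
          (pow_nonneg (by linarith : (0:ℝ) ≤ x) _)) hc0.le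
      calc c * (1/2:ℝ)^(k-1) * (1-x)⁻¹
          = c * ((1/2:ℝ)^(k-1) * (1-x)⁻¹) := by ring
        _ ≤ c * (x^(k-1) * ((1-x)^(n-k) * (1-x) ^ (-(m:ℝ)/2))) := h3
        _ = c * x^(k-1) * (1-x)^(n-k) * (1-x) ^ (-(m:ℝ)/2) := by ring
    · fun_prop
  · set N : ℕ := 2 * (n - k + 1) with hN
    apply aux_top _ ?_ (c * (1/2:ℝ)^(k-1) / (N.factorial : ℝ)) (by positivity)
    · intro x hx
      obtain ⟨hx1, hx2⟩ := hx
      have hy : 0 < 1 - x := by linarith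
      have hexp : ((1-x) ^ (-(1:ℝ)/2))^N / (N.factorial : ℝ) ≤ Real.exp ((1-x) ^ (-(1:ℝ)/2)) :=
        Real.pow_div_factorial_le_exp _ (Real.rpow_nonneg hy.le _) N
      have h2 : (1-x)⁻¹ / (N.factorial : ℝ) ≤ (1-x)^(n-k) * Real.exp ((1-x) ^ (-(1:ℝ)/2)) := by
        have heq : (1-x)^(n-k) * (((1-x) ^ (-(1:ℝ)/2))^N / (N.factorial : ℝ)) = (1-x)⁻¹ / (N.factorial : ℝ) := by
          rw [← Real.rpow_natCast ((1-x) ^ (-(1:ℝ)/2)) N, ← Real.rpow_mul hy.le]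
          rw [← Real.rpow_natCast (1-x) (n-k), ← Real.rpow_neg_one (1-x),
            div_eq_mul_inv, div_eq_mul_inv, ← mul_assoc, ← Real.rpow_add hy]
          congr 2
          have : ((N:ℕ):ℝ) = 2 * ((n:ℝ) - k + 1) := by
            rw [hN]; push_cast [Nat.cast_sub hkn]; ring
          rw [this]
          push_cast [Nat.cast_sub hkn]
          ring
        calc (1-x)⁻¹ / (N.factorial : ℝ)
            = (1-x)^(n-k) * (((1-x) ^ (-(1:ℝ)/2))^N / (N.factorial : ℝ)) := heq.symm
          _ ≤ (1-x)^(n-k) * Real.exp ((1-x) ^ (-(1:ℝ)/2)) :=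
              mul_le_mul_of_nonneg_left hexp (pow_nonneg hy.le _)
      have h3 := mul_le_mul_of_nonneg_left
        (mul_le_mul (hhalf x ⟨hx1, hx2⟩) h2
          (by positivity) (pow_nonneg (by linarith : (0:ℝ) ≤ x) _)) hc0.le
      calc c * (1/2:ℝ)^(k-1) / (N.factorial : ℝ) * (1-x)⁻¹
          = c * ((1/2:ℝ)^(k-1) * ((1-x)⁻¹ / (N.factorial : ℝ))) := by ring
        _ ≤ c * (x^(k-1) * ((1-x)^(n-k) * Real.exp ((1-x) ^ (-(1:ℝ)/2)))) := h3
        _ = c * x^(k-1) * (1-x)^(n-k) * Real.exp ((1-x) ^ (-(1:ℝ)/2)) := by ring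
    · fun_prop
end
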